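/- Let Γ = ⟨R_{-1}, R_0, ..., R_n⟩ be a generalized string C-group. In the poset K(Γ) with i-faces the right cosets Γ_i φ and partial order Γ_i φ ≤ Γ_j ψ iff i ≤ j and φψ^{-1} ∈ Γ_{i+1}^+ Γ_{j-1}^-, the relation Γ_i φ ≤ Γ_j ψ holds if and only if i ≤ j and Γ_i φ ∩ Γ_j ψ ≠ ∅. -/

import Mathlib

open Set Pointwise

/-- The distinguished subgroup `Γ_I = ⟨R_i : i ∈ I⟩` of a group with a system of
generating subgroups `R : ℤ → Subgroup G` (with the convention `Γ_∅ = R_{-1}`,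
which is harmless for nonempty `I ⊆ {-1,…,n}` since `R_{-1}` is contained in
every `R_i`). -/
def GamI {G : Type*} [Group G] (R : ℤ → Subgroup G) (I : Set ℤ) : Subgroup G :=
  R (-1) ⊔ ⨆ i ∈ I, R i

/-- `Γ_k^- = ⟨R_j : j ≤ k⟩`. -/
def Gminus {G : Type*} [Group G] (R : ℤ → Subgroup G) (k : ℤ) : Subgroup G :=
  GamI R (Set.Icc (-1) k)

/-- `Γ_k^+ = ⟨R_j : j ≥ k⟩`. -/
def Gplus {G : Type*} [Group G] (R : ℤ → Subgroup G) (n k : ℤ) : Subgroup G :=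
  GamI R (Set.Icc k n)

/-- `Γ_i = ⟨R_j : j ≠ i⟩`. -/
def Gsub {G : Type*} [Group G] (R : ℤ → Subgroup G) (n i : ℤ) : Subgroup G :=
  GamI R (Set.Icc (-1) n \ {i})

/-- A generalized string C-group of rank `n`: a group generated by subgroups
`R_{-1}, R_0, …, R_n` with `R_{-1} = R_n` a proper subgroup of each `R_i`
(`0 ≤ i ≤ n-1`), satisfying the intersection property and the commutation rules
`R_i R_j = R_j R_i` (as product sets) for non-adjacent indices. -/
structure GenStringC {G : Type*} [Group G] (n : ℤ) (R : ℤ → Subgroup G) : Prop where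
  one_le_n : 1 ≤ n
  gen_top : GamI R (Set.Icc (-1) n) = ⊤
  ends_eq : R (-1) = R n
  ends_lt : ∀ i ∈ Set.Icc (0 : ℤ) (n - 1), R (-1) < R i
  inter : ∀ I J : Set ℤ, I ⊆ Set.Icc (-1 : ℤ) n → J ⊆ Set.Icc (-1 : ℤ) n →
    GamI R I ⊓ GamI R J = GamI R (I ∩ J)
  comm : ∀ i j : ℤ, -1 ≤ i → i < j - 1 → j ≤ n →
    (↑(R i) : Set G) * ↑(R j) = (↑(R j) : Set G) * ↑(R i)

/-- The set of `i`-faces of `K(Γ)`: right cosets of `Γ_i = ⟨R_k : k ≠ i⟩`. -/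
def Gface {G : Type*} [Group G] (n : ℤ) (R : ℤ → Subgroup G) (i : ℤ) :=
  Quotient (QuotientGroup.rightRel (Gsub R n i))

/-- The faces of the complex `K(Γ)`: for each rank `i ∈ {-1,…,n}` the right
cosets `Γ_i φ`. -/
def KF {G : Type*} [Group G] (n : ℤ) (R : ℤ → Subgroup G) :=
  Σ i : ↥(Set.Icc (-1 : ℤ) n), Gface n R i.1

/-- The incidence relation of `K(Γ)`:
`Γ_i φ ≤ Γ_j ψ  iff  i ≤ j and φψ⁻¹ ∈ Γ_{i+1}^+ Γ_{j-1}^-`. -/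
def KGle {G : Type*} [Group G] (n : ℤ) (R : ℤ → Subgroup G)
    (x y : KF n R) : Prop :=
  x.1.1 ≤ y.1.1 ∧ ∃ φ ψ : G,
    x.2 = Quotient.mk (QuotientGroup.rightRel (Gsub R n x.1.1)) φ ∧
    y.2 = Quotient.mk (QuotientGroup.rightRel (Gsub R n y.1.1)) ψ ∧
    φ * ψ⁻¹ ∈ (↑(Gplus R n (x.1.1 + 1)) : Set G) * ↑(Gminus R (y.1.1 - 1))

/-- Right multiplication action of `Γ` on the faces of `K(Γ)`. -/
def rmulKF {G : Type*} [Group G] (n : ℤ) (R : ℤ → Subgroup G) (g : G)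
    (x : KF n R) : KF n R :=
  ⟨x.1, Quotient.map (· * g)
    (fun a b h => by
      have h' : b * a⁻¹ ∈ Gsub R n x.1.1 :=
        (QuotientGroup.rightRel_apply).1 h
      refine (QuotientGroup.rightRel_apply).2 ?_
      simpa [mul_assoc] using h') x.2⟩

/-! Γ_i Γ_j = Γ_{i+1}^+ Γ_{j-1}^- for i ≤ j: writing Γ_i = Γ_{i+1}^+ Γ_{i-1}^- and
Γ_j = Γ_{j-1}^- Γ_{j+1}^+ (the two factors permute by the commutation rules, so their join is
their product set), the middle factors Γ_{i-1}^- Γ_{j-1}^- collapse to Γ_{j-1}^-, which permutes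
past Γ_{j+1}^+, and then Γ_{i+1}^+ absorbs Γ_{j+1}^+. Finally φψ⁻¹ ∈ Γ_i Γ_j says exactly that
Γ_i φ and Γ_j ψ meet. -/

namespace Subgroup

variable {G : Type*} [Group G]

lemma coe_mul_coe_of_le {A B : Subgroup G} (h : A ≤ B) : (A : Set G) * B = B :=
  Subset.antisymm (mul_subset (SetLike.coe_subset_coe.2 h) le_rfl)
    (subset_mul_right _ A.one_mem)

lemma coe_mul_coe_of_ge {A B : Subgroup G} (h : A ≤ B) : (B : Set G) * A = B :=
  Subset.antisymm (mul_subset le_rfl (SetLike.coe_subset_coe.2 h))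
    (subset_mul_left _ A.one_mem)

lemma coe_mul_comm_of_le {A B : Subgroup G} (h : A ≤ B) : (A : Set G) * B = B * A := by
  rw [coe_mul_coe_of_le h, coe_mul_coe_of_ge h]

lemma coe_mul_comm_of_subset {H K : Subgroup G} (h : (H : Set G) * K ⊆ K * H) :
    (H : Set G) * K = K * H := by
  refine Subset.antisymm h ?_
  simpa only [mul_inv_rev, inv_coe_set] using Set.inv_subset_inv.2 h

lemma coe_sup_of_mul_comm {A B : Subgroup G} (h : (A : Set G) * B = B * A) :
    ((A ⊔ B : Subgroup G) : Set G) = A * B := by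
  have mul_closed : (A * B : Set G) * (A * B) = A * B :=
    calc (A * B : Set G) * (A * B) = A * (B * A) * B := by simp only [mul_assoc]
      _ = (A * A) * (B * B) := by rw [← h]; simp only [mul_assoc]
      _ = A * B := by rw [coe_mul_coe_of_le le_rfl, coe_mul_coe_of_le le_rfl]
  let S : Subgroup G :=
    { carrier := A * B
      one_mem' := ⟨1, A.one_mem, 1, B.one_mem, one_mul 1⟩
      mul_mem' := fun hx hy => mul_closed ▸ Set.mul_mem_mul hx hy
      inv_mem' := fun {x} hx => by
        have : x⁻¹ ∈ ((A : Set G) * B)⁻¹ := Set.inv_mem_inv.2 hx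
        rwa [mul_inv_rev, inv_coe_set, inv_coe_set, ← h] at this }
  refine Subset.antisymm (?_ : A ⊔ B ≤ S) (mul_subset (SetLike.coe_subset_coe.2 le_sup_left)
    (SetLike.coe_subset_coe.2 le_sup_right))
  exact sup_le (fun a ha => ⟨a, ha, 1, B.one_mem, mul_one a⟩)
    (fun b hb => ⟨1, A.one_mem, b, hb, one_mul b⟩)

lemma iSup_coe_mul_comm {ι : Sort*} (A : ι → Subgroup G) (K : Subgroup G)
    (h : ∀ i, (A i : Set G) * K = K * A i) :
    ((⨆ i, A i : Subgroup G) : Set G) * K = K * (⨆ i, A i : Subgroup G) := by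
  set H := ⨆ i, A i
  have key : ∀ x ∈ H, ∀ k ∈ K, x * k ∈ (K : Set G) * H := by
    intro x hx
    refine iSup_induction A (C := fun x => ∀ k ∈ K, x * k ∈ (K : Set G) * H) hx ?_ ?_ ?_
    · intro i x hx k hk
      have : x * k ∈ (K : Set G) * A i := h i ▸ Set.mul_mem_mul hx hk
      exact Set.mul_subset_mul_left (SetLike.coe_subset_coe.2 (le_iSup A i)) this
    · exact fun k hk => ⟨k, hk, 1, H.one_mem, by simp⟩
    · intro x y ihx ihy k hk
      obtain ⟨k', hk', h', hh', hy⟩ := ihy k hk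
      obtain ⟨k'', hk'', h'', hh'', hx⟩ := ihx k' hk'
      exact ⟨k'', hk'', h'' * h', mul_mem hh'' hh', by rw [mul_assoc, ← hy, ← mul_assoc, ← hx,
        mul_assoc]⟩
  exact coe_mul_comm_of_subset fun _ ⟨x, hx, k, hk, hxk⟩ => hxk ▸ key x hx k hk

lemma iSup_coe_mul_iSup_comm {ι κ : Sort*} (A : ι → Subgroup G) (B : κ → Subgroup G)
    (h : ∀ i j, (A i : Set G) * B j = B j * A i) :
    ((⨆ i, A i : Subgroup G) : Set G) * (⨆ j, B j : Subgroup G) =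
      (⨆ j, B j : Subgroup G) * (⨆ i, A i : Subgroup G) :=
  iSup_coe_mul_comm A _ fun i => (iSup_coe_mul_comm B (A i) fun j => (h i j).symm).symm

lemma mul_inv_mem_mul_iff_nonempty_inter (S : Subgroup G) (T : Set G) (φ ψ : G) :
    φ * ψ⁻¹ ∈ (S : Set G) * T ↔ ((S : Set G) * {φ} ∩ (T * {ψ})).Nonempty := by
  simp only [Set.mul_singleton, Set.mem_mul]
  constructor
  · rintro ⟨s, hs, t, ht, hst⟩
    exact ⟨t * ψ, ⟨s⁻¹, inv_mem hs, by
      beta_reduce; rw [show φ = s * t * ψ by rw [hst, inv_mul_cancel_right]]; group⟩, t, ht, rfl⟩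
  · rintro ⟨_, ⟨s, hs, rfl⟩, t, ht, hts⟩
    exact ⟨s⁻¹, inv_mem hs, t, ht, by
      beta_reduce at hts; rw [show φ = s⁻¹ * (t * ψ) by rw [hts, inv_mul_cancel_left]]; group⟩

end Subgroup

section GamI

variable {G : Type*} [Group G] (R : ℤ → Subgroup G)

lemma GamI_eq_iSup (I : Set ℤ) : GamI R I = ⨆ k : ↥(insert (-1 : ℤ) I), R k := by
  rw [GamI, iSup_subtype'' (insert (-1 : ℤ) I) R, iSup_insert]

lemma GamI_union (I J : Set ℤ) : GamI R (I ∪ J) = GamI R I ⊔ GamI R J := by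
  rw [GamI, GamI, GamI, iSup_union, sup_sup_distrib_left]

lemma GamI_mono {I J : Set ℤ} (h : I ⊆ J) : GamI R I ≤ GamI R J :=
  sup_le_sup_left (biSup_mono h) _

lemma GamI_coe_mul_comm (I J : Set ℤ)
    (h : ∀ k ∈ insert (-1 : ℤ) I, ∀ l ∈ insert (-1 : ℤ) J,
      (R k : Set G) * R l = R l * R k) :
    (GamI R I : Set G) * GamI R J = GamI R J * GamI R I := by
  rw [GamI_eq_iSup R I, GamI_eq_iSup R J]
  exact Subgroup.iSup_coe_mul_iSup_comm _ _ fun k l => h k k.2 l l.2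

lemma Gsub_eq_sup {n i : ℤ} (h1 : -1 ≤ i) (h2 : i ≤ n) :
    Gsub R n i = Gminus R (i - 1) ⊔ Gplus R n (i + 1) := by
  rw [Gsub, Gminus, Gplus, ← GamI_union]
  congr 1
  ext k
  simp only [Set.mem_sdiff, Set.mem_Icc, Set.mem_singleton_iff, Set.mem_union]
  omega

end GamI

namespace GenStringC

variable {G : Type*} [Group G] {n : ℤ} {R : ℤ → Subgroup G}

lemma R_neg_one_le (hC : GenStringC n R) {l : ℤ} (h1 : -1 ≤ l) (h2 : l ≤ n) :
    R (-1) ≤ R l := by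
  obtain rfl | hn := eq_or_ne l n
  · exact hC.ends_eq.le
  obtain rfl | hl := eq_or_ne l (-1)
  · exact le_rfl
  · exact (hC.ends_lt l ⟨by omega, by omega⟩).le

lemma Gminus_mul_Gplus_comm (hC : GenStringC n R) {a b : ℤ}
    (han : a ≤ n) (hb : -1 ≤ b) (hab : a + 2 ≤ b) :
    (Gminus R a : Set G) * Gplus R n b = Gplus R n b * Gminus R a := by
  refine GamI_coe_mul_comm R _ _ fun k hk l hl => ?_
  simp only [Set.mem_insert_iff, Set.mem_Icc] at hk hl
  obtain rfl | ⟨hl1, hl2⟩ := hl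
  · obtain rfl | ⟨hk1, hk2⟩ := hk
    · rfl
    · exact (Subgroup.coe_mul_comm_of_le (hC.R_neg_one_le hk1 (hk2.trans han))).symm
  · obtain rfl | ⟨hk1, hk2⟩ := hk
    · exact Subgroup.coe_mul_comm_of_le (hC.R_neg_one_le (by omega) hl2)
    · exact hC.comm k l hk1 (by omega) hl2

lemma coe_Gsub_mul_Gsub (hC : GenStringC n R) {i j : ℤ}
    (hi : -1 ≤ i) (hij : i ≤ j) (hj : j ≤ n) :
    (Gsub R n i : Set G) * Gsub R n j = Gplus R n (i + 1) * Gminus R (j - 1) := by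
  have comm_i := hC.Gminus_mul_Gplus_comm (a := i - 1) (b := i + 1) (by omega) (by omega) (by omega)
  have comm_j := hC.Gminus_mul_Gplus_comm (a := j - 1) (b := j + 1) (by omega) (by omega) (by omega)
  have hi' : (Gsub R n i : Set G) = Gplus R n (i + 1) * Gminus R (i - 1) := by
    rw [Gsub_eq_sup R hi (by omega), sup_comm, Subgroup.coe_sup_of_mul_comm comm_i.symm]
  have hj' : (Gsub R n j : Set G) = Gminus R (j - 1) * Gplus R n (j + 1) := by
    rw [Gsub_eq_sup R (by omega) hj, Subgroup.coe_sup_of_mul_comm comm_j]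
  have minus_le : Gminus R (i - 1) ≤ Gminus R (j - 1) :=
    GamI_mono R (Set.Icc_subset_Icc_right (by omega))
  have plus_le : Gplus R n (j + 1) ≤ Gplus R n (i + 1) :=
    GamI_mono R (Set.Icc_subset_Icc_left (by omega))
  rw [hi', hj', mul_assoc, ← mul_assoc (Gminus R (i - 1) : Set G),
    Subgroup.coe_mul_coe_of_le minus_le, comm_j, ← mul_assoc, Subgroup.coe_mul_coe_of_ge plus_le]

end GenStringC

/-- in `K(Γ)`, `Γ_i φ ≤ Γ_j ψ` holds if and only if `i ≤ j` and
the right cosets `Γ_i φ` and `Γ_j ψ` intersect. -/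
theorem kgle_iff_cosets_meet {G : Type*} [Group G]
    (n : ℤ) (R : ℤ → Subgroup G) (hC : GenStringC n R)
    (x y : KF n R) :
    KGle n R x y ↔
      x.1.1 ≤ y.1.1 ∧ ∃ φ ψ : G,
        x.2 = Quotient.mk (QuotientGroup.rightRel (Gsub R n x.1.1)) φ ∧
        y.2 = Quotient.mk (QuotientGroup.rightRel (Gsub R n y.1.1)) ψ ∧
        (((↑(Gsub R n x.1.1) : Set G) * {φ}) ∩
          ((↑(Gsub R n y.1.1) : Set G) * {ψ})).Nonempty := by
  refine and_congr_right fun hij => ?_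
  have hprod := hC.coe_Gsub_mul_Gsub x.1.2.1 hij y.1.2.2
  refine exists₂_congr fun φ ψ => and_congr_right fun _ => and_congr_right fun _ => ?_
  rw [← hprod]
  exact Subgroup.mul_inv_mem_mul_iff_nonempty_inter _ _ φ ψ
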